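/- For every n ≥ 7, the words u over {a,b} of length at most 5 satisfying 4 ∉ δ(Q_n,u) in the automaton 𝒜_n are exactly the six words abaa, abba, babaa, babba, aabaa, aabba; moreover, for each of these six words u one has δ(Q_n,u) = Q_n ∖ {1,4}. -/

import Mathlib

/-- The two letters of a binary alphabet. -/
inductive Letter where
  | a : Letter
  | b : Letter
deriving DecidableEq

/-- The transition function of the automaton `𝒜ₙ` on the state set
`Qₙ = {0, 1, …, n-1}` (represented inside `ℕ`):
`δ(0,a)=δ(0,b)=0`; `δ(1,a)=0`, `δ(2,a)=4`, `δ(3,a)=2`, `δ(4,a)=3`;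
`δ(1,b)=3`, `δ(2,b)=1`, `δ(3,b)=2`; and for `4 ≤ j ≤ n-1`:
`δ(j,a) = j-1` if `j ≥ 6` is even, `δ(j,a) = j+1` if `j ≥ 5` is odd and
`j ≠ n-1`, `δ(j,a) = j` if `j = n-1` is odd; `δ(j,b) = j-1` if `j ≥ 5` is odd,
`δ(j,b) = j+1` if `j ≥ 4` is even and `j ≠ n-1`, `δ(j,b) = j` if `j = n-1`
is even. -/
def anDelta (n : ℕ) (q : ℕ) (ℓ : Letter) : ℕ :=
  match q, ℓ with
  | 0, _ => 0
  | 1, Letter.a => 0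
  | 1, Letter.b => 3
  | 2, Letter.a => 4
  | 2, Letter.b => 1
  | 3, _ => 2
  | 4, Letter.a => 3
  | j, Letter.a => if j % 2 = 1 then (if j = n - 1 then j else j + 1) else j - 1
  | j, Letter.b => if j % 2 = 0 then (if j = n - 1 then j else j + 1) else j - 1

/-- Extension of the transition function of `𝒜ₙ` to words:
`δ(q, uv) = δ(δ(q, u), v)`. -/
def anStar (n : ℕ) (q : ℕ) (w : List Letter) : ℕ :=
  w.foldl (anDelta n) q

/-!
The states `q ≥ 5` form a chain `4 — 5 — 6 — ⋯ — n-1` along which every letter moves them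
by at most one step, and on `6 ≤ q < n` each letter is an involution. Hence a word of length
`≤ 5` only sees the states within distance `5` of its start: for `n ≥ 21` its action on the
small states does not depend on `n` (a finite computation at `n = 21`), a state `q ≥ 10` never
reaches `1` or `4`, and every target `t ≥ 11` is hit from the state obtained by reading the
word backwards from `t`. The finitely many automata with `7 ≤ n < 21` are checked directly.
-/

lemma anDelta_congr {n m q : ℕ} (hn : q + 1 < n) (hm : q + 1 < m) (ℓ : Letter) :
    anDelta n q ℓ = anDelta m q ℓ := by
  rcases q with _|_|_|_|_|j <;> cases ℓ <;> simp only [anDelta] <;> (try split_ifs) <;> omega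

lemma anDelta_le (n q : ℕ) (ℓ : Letter) : anDelta n q ℓ ≤ max q 4 + 1 := by
  rcases q with _|_|_|_|_|j <;> cases ℓ <;> simp only [anDelta] <;> (try split_ifs) <;> omega

lemma anDelta_lt {n q : ℕ} (hn : 5 ≤ n) (hq : q < n) (ℓ : Letter) : anDelta n q ℓ < n := by
  rcases q with _|_|_|_|_|j <;> cases ℓ <;> simp only [anDelta] <;> (try split_ifs) <;> omega

lemma anDelta_ge {n q : ℕ} (hq : 5 ≤ q) (ℓ : Letter) : q ≤ anDelta n q ℓ + 1 := by
  rcases q with _|_|_|_|_|j <;> cases ℓ <;> simp only [anDelta] <;> (try split_ifs) <;> omega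

lemma anDelta_a_of_five_le {n q : ℕ} (hq : 5 ≤ q) :
    anDelta n q Letter.a = if q % 2 = 1 then (if q = n - 1 then q else q + 1) else q - 1 := by
  obtain ⟨j, rfl⟩ : ∃ j, q = j + 5 := ⟨q - 5, by omega⟩
  rfl

lemma anDelta_b_of_five_le {n q : ℕ} (hq : 5 ≤ q) :
    anDelta n q Letter.b = if q % 2 = 0 then (if q = n - 1 then q else q + 1) else q - 1 := by
  obtain ⟨j, rfl⟩ : ∃ j, q = j + 5 := ⟨q - 5, by omega⟩
  rfl

/-- On the chain `6 ≤ q < n` each letter acts as an involution: `a` swaps `2k+1 ↔ 2k+2`,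
`b` swaps `2k ↔ 2k+1`, and the last state is fixed. -/
lemma anDelta_anDelta {n q : ℕ} (hq : 6 ≤ q) (hqn : q < n) (ℓ : Letter) :
    anDelta n (anDelta n q ℓ) ℓ = q := by
  cases ℓ
  · have hstep := anDelta_a_of_five_le (n := n) (q := q) (by omega)
    split_ifs at hstep <;> rw [hstep, anDelta_a_of_five_le (by omega)] <;> split_ifs <;> omega
  · have hstep := anDelta_b_of_five_le (n := n) (q := q) (by omega)
    split_ifs at hstep <;> rw [hstep, anDelta_b_of_five_le (by omega)] <;> split_ifs <;> omega

lemma anStar_cons (n q : ℕ) (ℓ : Letter) (w : List Letter) :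
    anStar n q (ℓ :: w) = anStar n (anDelta n q ℓ) w := rfl

lemma anStar_append_singleton (n q : ℕ) (w : List Letter) (ℓ : Letter) :
    anStar n q (w ++ [ℓ]) = anDelta n (anStar n q w) ℓ := by
  simp [anStar]

/-- Runs of length `|w|` from states `≤ n - |w| - 1` never see the boundary state `n - 1`. -/
lemma anStar_congr {n m : ℕ} : ∀ (w : List Letter) (q : ℕ),
    max q 4 + w.length < n → max q 4 + w.length < m → anStar n q w = anStar m q w
  | [], _, _, _ => rfl
  | ℓ :: w, q, hn, hm => by
    simp only [List.length_cons] at hn hm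
    have hle := anDelta_le m q ℓ
    rw [anStar_cons, anStar_cons, anDelta_congr (n := n) (m := m) (by omega) (by omega) ℓ]
    exact anStar_congr w _ (by omega) (by omega)

lemma anStar_lt {n : ℕ} (hn : 5 ≤ n) : ∀ (w : List Letter) (q : ℕ), q < n → anStar n q w < n
  | [], _, h => h
  | ℓ :: w, _, h => anStar_lt hn w _ (anDelta_lt hn h ℓ)

lemma anStar_ge (n : ℕ) : ∀ (w : List Letter) (q : ℕ), 4 + w.length ≤ q →
    q ≤ anStar n q w + w.length
  | [], _, _ => le_rfl
  | ℓ :: w, q, h => by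
    simp only [List.length_cons] at h ⊢
    have hstep := anDelta_ge (n := n) (q := q) (by omega) ℓ
    have hrest := anStar_ge n w (anDelta n q ℓ) (by omega)
    rw [anStar_cons]
    omega

lemma anStar_anStar_reverse {n : ℕ} : ∀ (w : List Letter) (t : ℕ), 6 + w.length ≤ t → t < n →
    anStar n (anStar n t w.reverse) w = t
  | [], _, _, _ => rfl
  | ℓ :: w, t, ht, htn => by
    simp only [List.length_cons] at ht
    have hge := anStar_ge n w.reverse t (by simp; omega)
    have hlt := anStar_lt (by omega) w.reverse t htn
    rw [List.reverse_cons, anStar_append_singleton, anStar_cons,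
      anDelta_anDelta (by simp at hge; omega) hlt]
    exact anStar_anStar_reverse w t (by omega) htn

/-- `δ(Qₙ, u)`. -/
def anImage (n : ℕ) (u : List Letter) : Finset ℕ :=
  (Finset.range n).image (fun q => anStar n q u)

def sixWords : List (List Letter) :=
  [[Letter.a, Letter.b, Letter.a, Letter.a],
   [Letter.a, Letter.b, Letter.b, Letter.a],
   [Letter.b, Letter.a, Letter.b, Letter.a, Letter.a],
   [Letter.b, Letter.a, Letter.b, Letter.b, Letter.a],
   [Letter.a, Letter.a, Letter.b, Letter.a, Letter.a],
   [Letter.a, Letter.a, Letter.b, Letter.b, Letter.a]]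

lemma length_le_of_mem_sixWords {u : List Letter} (hu : u ∈ sixWords) : u.length ≤ 5 := by
  revert u; decide

def wordsUpTo : ℕ → List (List Letter)
  | 0 => [[]]
  | k + 1 => [] :: ((wordsUpTo k).map (Letter.a :: ·) ++ (wordsUpTo k).map (Letter.b :: ·))

lemma mem_wordsUpTo : ∀ {u : List Letter} {k : ℕ}, u.length ≤ k → u ∈ wordsUpTo k
  | [], 0, _ => by simp [wordsUpTo]
  | [], _ + 1, _ => by simp [wordsUpTo]
  | Letter.a :: u, k + 1, h => by
    simp only [wordsUpTo, List.mem_cons, List.mem_append, List.mem_map]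
    exact Or.inr (Or.inl ⟨u, mem_wordsUpTo (by simpa using h), rfl⟩)
  | Letter.b :: u, k + 1, h => by
    simp only [wordsUpTo, List.mem_cons, List.mem_append, List.mem_map]
    exact Or.inr (Or.inr ⟨u, mem_wordsUpTo (by simpa using h), rfl⟩)

lemma length_le_of_mem_wordsUpTo : ∀ {k : ℕ} {u : List Letter}, u ∈ wordsUpTo k → u.length ≤ k
  | 0, _, h => by simp_all [wordsUpTo]
  | k + 1, _, h => by
    simp only [wordsUpTo, List.mem_cons, List.mem_append, List.mem_map] at h
    rcases h with rfl | ⟨v, hv, rfl⟩ | ⟨v, hv, rfl⟩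
    · simp
    all_goals simpa using length_le_of_mem_wordsUpTo hv

lemma exists_anStar_21_eq_four :
    ∀ u ∈ wordsUpTo 5, u ∉ sixWords → ∃ q < 10, anStar 21 q u = 4 := by
  decide

lemma anStar_21_ne_one_ne_four :
    ∀ u ∈ sixWords, ∀ q < 10, anStar 21 q u ≠ 1 ∧ anStar 21 q u ≠ 4 := by
  decide

lemma exists_anStar_21_eq :
    ∀ u ∈ sixWords, ∀ t < 11, t ≠ 1 → t ≠ 4 → ∃ q < 16, anStar 21 q u = t := by
  decide

lemma four_mem_anImage_of_not_mem_sixWords {n : ℕ} (hn : 21 ≤ n) {u : List Letter}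
    (hu : u ∈ wordsUpTo 5) (hsix : u ∉ sixWords) :
    4 ∈ anImage n u := by
  obtain ⟨q, hq, hq4⟩ := exists_anStar_21_eq_four u hu hsix
  have hlen := length_le_of_mem_wordsUpTo hu
  refine Finset.mem_image.2 ⟨q, Finset.mem_range.2 (by omega), ?_⟩
  rw [anStar_congr u q (by omega) (by omega : max q 4 + u.length < 21), hq4]

lemma anImage_subset_of_mem_sixWords {n : ℕ} (hn : 21 ≤ n) {u : List Letter} (hu : u ∈ sixWords) :
    anImage n u ⊆ Finset.range n \ {1, 4} := by
  have hlen := length_le_of_mem_sixWords hu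
  intro t ht
  obtain ⟨q, hq, rfl⟩ := Finset.mem_image.1 ht
  rw [Finset.mem_range] at hq
  have hlt := anStar_lt (by omega) u q hq
  suffices anStar n q u ≠ 1 ∧ anStar n q u ≠ 4 by simpa [hlt] using this
  rcases lt_or_ge q 10 with hq10 | hq10
  · rw [anStar_congr u q (by omega) (by omega : max q 4 + u.length < 21)]
    exact anStar_21_ne_one_ne_four u hu q hq10
  · have := anStar_ge n u q (by omega)
    omega

lemma subset_anImage_of_mem_sixWords {n : ℕ} (hn : 21 ≤ n) {u : List Letter} (hu : u ∈ sixWords) :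
    Finset.range n \ {1, 4} ⊆ anImage n u := by
  have hlen := length_le_of_mem_sixWords hu
  intro t ht
  simp only [Finset.mem_sdiff, Finset.mem_range, Finset.mem_insert, Finset.mem_singleton,
    not_or] at ht
  obtain ⟨htn, ht1, ht4⟩ := ht
  rw [anImage, Finset.mem_image]
  rcases lt_or_ge t 11 with ht11 | ht11
  · obtain ⟨q, hq, hqt⟩ := exists_anStar_21_eq u hu t ht11 ht1 ht4
    refine ⟨q, Finset.mem_range.2 (by omega), ?_⟩
    rw [anStar_congr u q (by omega) (by omega : max q 4 + u.length < 21), hqt]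
  · exact ⟨anStar n t u.reverse, Finset.mem_range.2 (anStar_lt (by omega) _ t htn),
      anStar_anStar_reverse u t (by omega) htn⟩

lemma anImage_eq_of_mem_sixWords {n : ℕ} (hn : 21 ≤ n) {u : List Letter} (hu : u ∈ sixWords) :
    anImage n u = Finset.range n \ {1, 4} :=
  (anImage_subset_of_mem_sixWords hn hu).antisymm (subset_anImage_of_mem_sixWords hn hu)

set_option maxHeartbeats 4000000 in
lemma anImage_of_lt_21 {n : ℕ} (hn : 7 ≤ n) (h21 : n < 21) : ∀ u ∈ wordsUpTo 5,
    (4 ∉ anImage n u ↔ u ∈ sixWords) ∧ (u ∈ sixWords → anImage n u = Finset.range n \ {1, 4}) := by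
  interval_cases n <;> decide

/-- For every `n ≥ 7`, the words `u` over `{a, b}` of length at most `5` with
`4 ∉ δ(Qₙ, u)` in `𝒜ₙ` are exactly the six words
`abaa, abba, babaa, babba, aabaa, aabba`; moreover, for each of these six
words `u` one has `δ(Qₙ, u) = Qₙ \ {1, 4}`. -/
theorem an_short_words_avoiding_four (n : ℕ) (hn : 7 ≤ n) :
    ∀ u : List Letter, u.length ≤ 5 →
      ((4 ∉ Finset.image (fun q => anStar n q u) (Finset.range n)) ↔
        u ∈ [[Letter.a, Letter.b, Letter.a, Letter.a],
             [Letter.a, Letter.b, Letter.b, Letter.a],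
             [Letter.b, Letter.a, Letter.b, Letter.a, Letter.a],
             [Letter.b, Letter.a, Letter.b, Letter.b, Letter.a],
             [Letter.a, Letter.a, Letter.b, Letter.a, Letter.a],
             [Letter.a, Letter.a, Letter.b, Letter.b, Letter.a]]) ∧
      (u ∈ [[Letter.a, Letter.b, Letter.a, Letter.a],
            [Letter.a, Letter.b, Letter.b, Letter.a],
            [Letter.b, Letter.a, Letter.b, Letter.a, Letter.a],
            [Letter.b, Letter.a, Letter.b, Letter.b, Letter.a],
            [Letter.a, Letter.a, Letter.b, Letter.a, Letter.a],
            [Letter.a, Letter.a, Letter.b, Letter.b, Letter.a]] →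
        Finset.image (fun q => anStar n q u) (Finset.range n) =
          Finset.range n \ {1, 4}) := by
  intro u hu
  rcases lt_or_ge n 21 with hsmall | hlarge
  · exact anImage_of_lt_21 hn hsmall u (mem_wordsUpTo hu)
  · refine ⟨⟨fun h4 => ?_, fun hsix => ?_⟩, anImage_eq_of_mem_sixWords hlarge⟩
    · by_contra hsix
      exact h4 (four_mem_anImage_of_not_mem_sixWords hlarge (mem_wordsUpTo hu) hsix)
    · change 4 ∉ anImage n u
      simp [anImage_eq_of_mem_sixWords hlarge hsix]
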